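/- Let p be a prime and suppose sequences (b_n)_{n≥0} in ℤ_(p) satisfy b_{ℓp^r} ≡ b_{ℓp^{r-1}} (mod p^r) for all ℓ, r ≥ 1. Let Ω(x) = Σ_{n≥0} b_n x^{n-1} dx and let t ∈ ℤ_(p)[[u]] have t(0) = 0 and unit linear coefficient. Then there exists Ψ ∈ ℤ_(p)[[u]] such that, as formal Laurent series in u, Σ_{n≥0} b_n·(t(u)^{n-1}·t'(u) − t(u^p)^{n-1}·t'(u^p)·p·u^{p-1}/p) equals Ψ'(u); that is, Ω(t(u)) − (1/p)·Ω(t(u^p)) is an exact differential dΨ with Ψ ∈ ℤ_(p)[[u]]. -/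

import Mathlib

open PowerSeries Finset

/-- `x ∈ ℤ_(p)`: `x` is a rational number whose denominator is prime to `p`. -/
def PInt (p : ℕ) (x : ℚ) : Prop := ∃ a b : ℤ, ¬ (p : ℤ) ∣ b ∧ (b : ℚ) * x = (a : ℚ)

/-- `x ∈ p^r·ℤ_(p)`. -/
def PMem (p : ℕ) (r : ℕ) (x : ℚ) : Prop :=
  ∃ a b : ℤ, ¬ (p : ℤ) ∣ b ∧ (b : ℚ) * x = (p : ℚ) ^ r * a

/-- Composition of a power series with `u ↦ u^p`. -/
noncomputable def substPow (p : ℕ) (t : PowerSeries ℚ) : PowerSeries ℚ :=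
  PowerSeries.mk fun n => if p ∣ n then coeff (R := ℚ) (n / p) t else 0

/-- The operator `θ = u·d/du` on power series. -/
noncomputable def theta (f : PowerSeries ℚ) : PowerSeries ℚ :=
  PowerSeries.mk fun n => (n : ℚ) * coeff (R := ℚ) n f

/-!
Write `E f = f(u^p)`, so that `θ ∘ E = p • E ∘ θ`, and `η = S₁ · θt / t`; the claim is
`θΨ = η − E η`. Since `θ(tⁿ)/tⁿ = n · θt/t`, the part `Σ_{n ≥ 1} b_n tⁿ⁻¹ dt` has the primitive
`G(t)` with `G = Σ b_n uⁿ / n`, and we take `Ψ₁ = G(t) − p⁻¹ G(E t)`. It splits as `H(t)`, where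
`H = G − p⁻¹ E G` is integral by the congruences on `b`, plus `p⁻¹ (G(t^p) − G(E t))`, which is
integral because `t^p ≡ E t mod p` (Frobenius) forces `(t^p)ⁿ ≡ (E t)ⁿ mod p^(v_p(n)+1)`.
For `b₀ dt/t` the primitive is logarithmic: Frobenius again gives `t^p = c · E t · (1 + p k)` with
`k` integral and `k(0) = 0`, and `Ψ₀ = p⁻¹ log(1 + p k)` is integral because `p^(j-1)/j ∈ ℤ_(p)`.
-/

section Rational

variable (p : ℕ) [hp : Fact p.Prime]

lemma not_natCast_dvd_one : ¬ (p : ℤ) ∣ 1 :=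
  (Nat.prime_iff_prime_int.mp hp.out).not_dvd_one

lemma not_natCast_dvd_mul {b c : ℤ} (hb : ¬ (p : ℤ) ∣ b) (hc : ¬ (p : ℤ) ∣ c) :
    ¬ (p : ℤ) ∣ b * c := fun h => ((Nat.prime_iff_prime_int.mp hp.out).dvd_mul.mp h).elim hb hc

def pIntegral : Subring ℚ where
  carrier := {x | PInt p x}
  one_mem' := ⟨1, 1, not_natCast_dvd_one p, by simp⟩
  zero_mem' := ⟨0, 1, not_natCast_dvd_one p, by simp⟩
  add_mem' := by
    rintro x y ⟨a, b, hb, hx⟩ ⟨c, d, hd, hy⟩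
    exact ⟨a * d + c * b, b * d, not_natCast_dvd_mul p hb hd, by
      push_cast; linear_combination (d : ℚ) * hx + (b : ℚ) * hy⟩
  mul_mem' := by
    rintro x y ⟨a, b, hb, hx⟩ ⟨c, d, hd, hy⟩
    exact ⟨a * c, b * d, not_natCast_dvd_mul p hb hd, by
      push_cast; linear_combination ((d : ℚ) * y) * hx + (a : ℚ) * hy⟩
  neg_mem' := by
    rintro x ⟨a, b, hb, hx⟩
    exact ⟨-a, b, hb, by push_cast; linear_combination -hx⟩

variable {p}

lemma div_natCast_mem_pIntegral {x : ℚ} (hx : x ∈ pIntegral p) {ℓ : ℕ} (hℓ : ¬ p ∣ ℓ) :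
    x / ℓ ∈ pIntegral p := by
  obtain ⟨a, b, hb, hab⟩ := hx
  have hℓ0 : (ℓ : ℚ) ≠ 0 := Nat.cast_ne_zero.mpr (by rintro rfl; exact hℓ (dvd_zero _))
  refine ⟨a, b * ℓ, not_natCast_dvd_mul p hb (by exact_mod_cast hℓ), ?_⟩
  push_cast
  rw [← hab]
  field_simp

lemma pow_factorization_mul_div_mem_pIntegral {y : ℚ} (hy : y ∈ pIntegral p) (n : ℕ) :
    (p : ℚ) ^ n.factorization p * y / n ∈ pIntegral p := by
  rcases eq_or_ne n 0 with rfl | hn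
  · simp
  have hsplit : (p : ℚ) ^ n.factorization p * (n / p ^ n.factorization p : ℕ) = n := by
    exact_mod_cast Nat.ordProj_mul_ordCompl_eq_self n p
  have hpow : (p : ℚ) ^ n.factorization p ≠ 0 := pow_ne_zero _ (by exact_mod_cast hp.out.ne_zero)
  have := div_natCast_mem_pIntegral hy (Nat.not_dvd_ordCompl hp.out hn)
  rwa [← hsplit, mul_div_mul_left _ _ hpow]

lemma exists_eq_pow_mul_of_pMem {r : ℕ} {x : ℚ} (hx : PMem p r x) :
    ∃ y ∈ pIntegral p, x = (p : ℚ) ^ r * y := by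
  obtain ⟨a, b, hb, hab⟩ := hx
  have hb0 : (b : ℚ) ≠ 0 := Int.cast_ne_zero.mpr (by rintro rfl; exact hb (dvd_zero _))
  exact ⟨a / b, ⟨a, b, hb, by field_simp⟩, by field_simp; linear_combination hab⟩

lemma pMem_div_natCast_mem_pIntegral {r : ℕ} {x : ℚ} (hx : PMem p r x) {n : ℕ}
    (hn : n.factorization p ≤ r) : x / n ∈ pIntegral p := by
  obtain ⟨y, hy, rfl⟩ := exists_eq_pow_mul_of_pMem hx
  have := pow_factorization_mul_div_mem_pIntegral
    (mul_mem (pow_mem (natCast_mem (pIntegral p) p) (r - n.factorization p)) hy) n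
  rwa [← mul_assoc, ← pow_add, Nat.add_sub_cancel' hn] at this

lemma pow_pred_div_mem_pIntegral (j : ℕ) : (p : ℚ) ^ (j - 1) / j ∈ pIntegral p := by
  rcases eq_or_ne j 0 with rfl | hj
  · simp
  have hv : j.factorization p ≤ j - 1 := by
    have := Nat.lt_pow_self (n := j.factorization p) hp.out.one_lt
    have := Nat.le_of_dvd (Nat.pos_of_ne_zero hj) (Nat.ordProj_dvd j p)
    omega
  have := pow_factorization_mul_div_mem_pIntegral
    (pow_mem (natCast_mem (pIntegral p) p) (j - 1 - j.factorization p)) j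
  rwa [← pow_add, Nat.add_sub_cancel' hv] at this

lemma fermat_mem_pIntegral {x : ℚ} (hx : x ∈ pIntegral p) :
    (x ^ p - x) / p ∈ pIntegral p := by
  obtain ⟨a, b, hb, hab⟩ := hx
  obtain ⟨c, hc⟩ : (p : ℤ) ∣ a ^ p - a * b ^ (p - 1) := by
    rw [← ZMod.intCast_zmod_eq_zero_iff_dvd]
    have hbz : (b : ZMod p) ≠ 0 := by rwa [ne_eq, ZMod.intCast_zmod_eq_zero_iff_dvd]
    push_cast
    rw [ZMod.pow_card, ZMod.pow_card_sub_one_eq_one hbz, mul_one, sub_self]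
  refine ⟨c, b ^ p, fun h => hb (Int.Prime.dvd_pow' hp.out h), ?_⟩
  have hbp : (b : ℚ) ^ p = b ^ (p - 1) * b := by
    rw [← pow_succ, Nat.sub_add_cancel hp.out.one_lt.le]
  have hp0 : (p : ℚ) ≠ 0 := by exact_mod_cast hp.out.ne_zero
  have hcq : (a : ℚ) ^ p - a * b ^ (p - 1) = p * c := by exact_mod_cast hc
  push_cast
  rw [← hab] at hcq
  field_simp
  linear_combination hcq - x * hbp

end Rational

section GeneralSeries

variable {R : Type*} [CommRing R]

lemma coeff_pow_eq_zero_of_lt {A : R⟦X⟧} (hA : constantCoeff A = 0) {m n : ℕ} (h : m < n) :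
    coeff m (A ^ n) = 0 :=
  X_pow_dvd_iff.mp (pow_dvd_pow_of_dvd (X_dvd_iff.mpr hA) n) m h

lemma coeff_subst_eq_sum {A : R⟦X⟧} (hA : constantCoeff A = 0) (G : R⟦X⟧) (m : ℕ) :
    coeff m (G.subst A) = ∑ n ∈ range (m + 1), coeff n G * coeff m (A ^ n) := by
  rw [coeff_subst' (HasSubst.of_constantCoeff_zero' hA),
    finsum_eq_sum_of_support_subset (s := range (m + 1))]
  · simp only [smul_eq_mul]
  · intro n hn
    by_contra hnm
    simp only [coe_range, Set.mem_Iio] at hnm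
    exact hn (by simp only [smul_eq_mul, coeff_pow_eq_zero_of_lt hA (by omega : m < n), mul_zero])

lemma subst_expand {A : R⟦X⟧} (hA : constantCoeff A = 0) (k : ℕ) (hk : k ≠ 0) (G : R⟦X⟧) :
    (expand k hk G).subst A = G.subst (A ^ k) := by
  rw [expand_apply, subst_comp_subst_apply (HasSubst.X_pow hk) (HasSubst.of_constantCoeff_zero' hA),
    subst_pow (HasSubst.of_constantCoeff_zero' hA), subst_X (HasSubst.of_constantCoeff_zero' hA)]

lemma expand_subst_eq_subst_expand {A : R⟦X⟧} (hA : constantCoeff A = 0) (k : ℕ) (hk : k ≠ 0)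
    (G : R⟦X⟧) : expand k hk (G.subst A) = G.subst (expand k hk A) := by
  rw [expand_apply, expand_apply, subst_comp_subst_apply (HasSubst.of_constantCoeff_zero' hA)
    (HasSubst.X_pow hk)]

lemma mk_sum_mul_coeff_pow_eq_subst {A : R⟦X⟧} (hA : constantCoeff A = 0) (b : ℕ → R) :
    PowerSeries.mk (fun m => ∑ n ∈ range (m + 1), b n * coeff m (A ^ n)) =
      (PowerSeries.mk b).subst A := by
  ext m; rw [coeff_subst_eq_sum hA]; simp

lemma subst_C' (A : R⟦X⟧) (c : R) : (C c).subst A = C c :=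
  subst_C c

lemma subst_C_mul {A : R⟦X⟧} (hA : HasSubst A) (c : R) (G : R⟦X⟧) :
    (C c * G).subst A = C c * G.subst A := by
  rw [subst_mul hA, subst_C']

end GeneralSeries

section Theta

lemma theta_eq_X_mul_derivative (f : ℚ⟦X⟧) : theta f = X * d⁄dX ℚ f := by
  ext (_ | n)
  · simp [theta]
  · rw [theta, coeff_mk, coeff_succ_X_mul, coeff_derivative]
    push_cast
    ring

lemma theta_add (f g : ℚ⟦X⟧) : theta (f + g) = theta f + theta g := by
  ext n; simp [theta, mul_add]

lemma theta_sub (f g : ℚ⟦X⟧) : theta (f - g) = theta f - theta g := by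
  ext n; simp [theta, mul_sub]

lemma theta_C_mul (c : ℚ) (f : ℚ⟦X⟧) : theta (C c * f) = C c * theta f := by
  ext n; simp [theta, mul_left_comm]

lemma theta_subst_mul {A : ℚ⟦X⟧} (hA : constantCoeff A = 0) (G : ℚ⟦X⟧) :
    theta (G.subst A) * A = (theta G).subst A * theta A := by
  have hA' := HasSubst.of_constantCoeff_zero' hA
  simp only [theta_eq_X_mul_derivative, derivative_subst hA', subst_mul hA', subst_X hA']
  ring

lemma substPow_eq_expand {k : ℕ} (hk : k ≠ 0) (f : ℚ⟦X⟧) : substPow k f = expand k hk f := by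
  ext n
  simp [substPow, coeff_expand]

lemma theta_expand {k : ℕ} (hk : k ≠ 0) (f : ℚ⟦X⟧) :
    theta (expand k hk f) = C (k : ℚ) * expand k hk (theta f) := by
  ext n
  simp only [theta, coeff_mk, coeff_C_mul, coeff_expand]
  split_ifs with h
  · obtain ⟨m, rfl⟩ := h
    simp only [Nat.cast_mul, Nat.mul_div_cancel_left m (Nat.pos_of_ne_zero hk)]
    ring
  · simp

end Theta

lemma pow_factorization_succ_dvd_pow_sub_pow {R : Type*} [CommRing R] {p : ℕ} {a b : R}
    (h : (p : R) ∣ a - b) (n : ℕ) : (p : R) ^ (n.factorization p + 1) ∣ a ^ n - b ^ n := by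
  have := (dvd_sub_pow_of_dvd_sub h (n.factorization p)).trans
    (sub_dvd_pow_sub_pow (a ^ p ^ n.factorization p) (b ^ p ^ n.factorization p)
      (n / p ^ n.factorization p))
  rwa [← pow_mul, ← pow_mul, Nat.ordProj_mul_ordCompl_eq_self] at this

section IntegralSeries

variable (p : ℕ) [hp : Fact p.Prime]

def pIntegralSeries : Subring ℚ⟦X⟧ where
  carrier := {f | ∀ n, coeff n f ∈ pIntegral p}
  one_mem' n := by rw [coeff_one]; split_ifs <;> simp
  zero_mem' n := by simp
  add_mem' hf hg n := by rw [map_add]; exact add_mem (hf n) (hg n)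
  mul_mem' hf hg n := by
    rw [coeff_mul]; exact sum_mem fun ij _ => mul_mem (hf ij.1) (hg ij.2)
  neg_mem' hf n := by rw [map_neg]; exact neg_mem (hf n)

variable {p}

lemma C_mem_pIntegralSeries {c : ℚ} (hc : c ∈ pIntegral p) : C c ∈ pIntegralSeries p := by
  intro n; rw [coeff_C]; split_ifs <;> simp [hc]

lemma X_mem_pIntegralSeries : (X : ℚ⟦X⟧) ∈ pIntegralSeries p := by
  intro n; rw [coeff_X]; split_ifs <;> simp

lemma expand_mem_pIntegralSeries {k : ℕ} (hk : k ≠ 0) {f : ℚ⟦X⟧} (hf : f ∈ pIntegralSeries p) :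
    expand k hk f ∈ pIntegralSeries p := by
  intro n; rw [coeff_expand]; split_ifs <;> simp [hf _]

lemma subst_mem_pIntegralSeries {G A : ℚ⟦X⟧} (hG : G ∈ pIntegralSeries p)
    (hA : A ∈ pIntegralSeries p) (hA0 : constantCoeff A = 0) : G.subst A ∈ pIntegralSeries p := by
  intro m
  rw [coeff_subst_eq_sum hA0]
  exact sum_mem fun n _ => mul_mem (hG n) (pow_mem hA n m)

/-- The geometric series `∑ (1 - f)ⁿ` inverts `f`. -/
lemma exists_mul_eq_one_of_constantCoeff_eq_one {f : ℚ⟦X⟧} (hf : f ∈ pIntegralSeries p)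
    (h1 : constantCoeff f = 1) : ∃ g ∈ pIntegralSeries p, g * f = 1 := by
  have h0 : constantCoeff (1 - f) = 0 := by simp [h1]
  have hgeom : (PowerSeries.mk 1 : ℚ⟦X⟧) ∈ pIntegralSeries p := fun n => by simp
  refine ⟨(PowerSeries.mk 1).subst (1 - f),
    subst_mem_pIntegralSeries hgeom (sub_mem (one_mem _) hf) h0, ?_⟩
  have hs := HasSubst.of_constantCoeff_zero' h0
  have := congrArg (substAlgHom hs) (mk_one_mul_one_sub_eq_one ℚ)
  rwa [map_mul, map_sub, map_one, substAlgHom_X, coe_substAlgHom, sub_sub_cancel] at this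

/-- Frobenius: `f ^ p ≡ f(X ^ p) mod p`. -/
lemma inv_mul_pow_sub_expand_mem {f : ℚ⟦X⟧} (hf : f ∈ pIntegralSeries p) :
    C (p : ℚ)⁻¹ * (f ^ p - expand p hp.out.ne_zero f) ∈ pIntegralSeries p := by
  suffices h : ∀ m, ∀ f ∈ pIntegralSeries p,
      coeff m (f ^ p - expand p hp.out.ne_zero f) / p ∈ pIntegral p by
    intro m; rw [coeff_C_mul, inv_mul_eq_div]; exact h m f hf
  intro m
  induction m using Nat.strong_induction_on with
  | _ m ih =>
  intro f hf
  set g : ℚ⟦X⟧ := PowerSeries.mk fun n => coeff (n + 1) f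
  set a := constantCoeff f
  have hg : g ∈ pIntegralSeries p := fun n => by simpa [g] using hf (n + 1)
  have ha : a ∈ pIntegral p := by simpa [a] using hf 0
  have hf_eq : f = C a + X * g := by rw [add_comm]; exact eq_X_mul_shift_add_const f
  obtain ⟨r, hr⟩ := exists_add_pow_prime_eq hp.out
    (⟨C a, C_mem_pIntegralSeries ha⟩ : pIntegralSeries p)
    ⟨X * g, mul_mem X_mem_pIntegralSeries hg⟩
  have hr' := congrArg Subtype.val hr
  push_cast at hr'
  have hdecomp : f ^ p - expand p hp.out.ne_zero f = C (a ^ p - a) +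
      X ^ p * (g ^ p - expand p hp.out.ne_zero g) + C (p : ℚ) * (C a * (X * g) * (r : ℚ⟦X⟧)) := by
    rw [hf_eq, hr', map_add, map_mul, expand_C, expand_X, map_sub, map_pow, map_natCast]
    ring
  rw [hdecomp, map_add, map_add, add_div, add_div, coeff_C_mul, coeff_C]
  refine add_mem (add_mem ?_ ?_) ?_
  · split_ifs <;> simp [fermat_mem_pIntegral ha]
  · rw [coeff_X_pow_mul']
    split_ifs with hpm
    · exact ih (m - p) (by have := hp.out.pos; omega) g hg
    · simp
  · rw [mul_div_cancel_left₀ _ (by exact_mod_cast hp.out.ne_zero)]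
    exact mul_mem (mul_mem (C_mem_pIntegralSeries ha) (mul_mem X_mem_pIntegralSeries hg)) r.2 m

lemma inv_mul_pow_sub_pow_mem {A B : ℚ⟦X⟧} (hA : A ∈ pIntegralSeries p)
    (hB : B ∈ pIntegralSeries p) (hAB : C (p : ℚ)⁻¹ * (A - B) ∈ pIntegralSeries p) (n : ℕ) :
    C ((p : ℚ) * n)⁻¹ * (A ^ n - B ^ n) ∈ pIntegralSeries p := by
  have hp0 : (p : ℚ) ≠ 0 := by exact_mod_cast hp.out.ne_zero
  have hdvd : (p : pIntegralSeries p) ∣ ⟨A, hA⟩ - ⟨B, hB⟩ := by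
    refine ⟨⟨_, hAB⟩, Subtype.ext ?_⟩
    push_cast
    rw [← map_natCast C, ← mul_assoc, ← map_mul, mul_inv_cancel₀ hp0, map_one, one_mul]
  obtain ⟨w, hw⟩ := pow_factorization_succ_dvd_pow_sub_pow hdvd n
  have hw' : A ^ n - B ^ n = C ((p : ℚ) ^ (n.factorization p + 1)) * w := by
    simpa using congrArg Subtype.val hw
  have hcoef : ((p : ℚ) * n)⁻¹ * (p : ℚ) ^ (n.factorization p + 1) =
      (p : ℚ) ^ n.factorization p * 1 / n := by
    rw [pow_succ]; field_simp
  rw [hw', ← mul_assoc, ← map_mul, hcoef]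
  exact mul_mem (C_mem_pIntegralSeries (pow_factorization_mul_div_mem_pIntegral (one_mem _) n)) w.2

lemma inv_mul_subst_sub_subst_mem {G A B : ℚ⟦X⟧} (hG : theta G ∈ pIntegralSeries p)
    (hA : A ∈ pIntegralSeries p) (hB : B ∈ pIntegralSeries p)
    (hA0 : constantCoeff A = 0) (hB0 : constantCoeff B = 0)
    (hAB : C (p : ℚ)⁻¹ * (A - B) ∈ pIntegralSeries p) :
    C (p : ℚ)⁻¹ * (G.subst A - G.subst B) ∈ pIntegralSeries p := by
  intro m
  have hterm : ∀ n, (p : ℚ)⁻¹ * (coeff n G * coeff m (A ^ n) - coeff n G * coeff m (B ^ n)) =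
      coeff n (theta G) * coeff m (C ((p : ℚ) * n)⁻¹ * (A ^ n - B ^ n)) := by
    intro n
    rcases eq_or_ne n 0 with rfl | hn
    · simp
    · have hn' : (n : ℚ) ≠ 0 := by exact_mod_cast hn
      simp only [theta, coeff_mk, coeff_C_mul, map_sub]
      field_simp
  rw [coeff_C_mul, map_sub, coeff_subst_eq_sum hA0, coeff_subst_eq_sum hB0, ← sum_sub_distrib,
    mul_sum]
  simp only [hterm]
  exact sum_mem fun n _ => mul_mem (hG n) (inv_mul_pow_sub_pow_mem hA hB hAB n m)

end IntegralSeries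

section Logarithm

/-- `log (1 + p X) / p`. -/
noncomputable def scaledLog (p : ℕ) : ℚ⟦X⟧ :=
  PowerSeries.mk fun j => (-1) ^ (j + 1) * ((p : ℚ) ^ (j - 1) / j)

lemma scaledLog_mem_pIntegralSeries {p : ℕ} [Fact p.Prime] :
    scaledLog p ∈ pIntegralSeries p := fun j => by
  rw [scaledLog, coeff_mk]
  exact mul_mem (pow_mem (neg_mem (one_mem _)) _) (pow_pred_div_mem_pIntegral j)

lemma derivative_scaledLog_mul (p : ℕ) : d⁄dX ℚ (scaledLog p) * (1 + C (p : ℚ) * X) = 1 := by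
  have hD : d⁄dX ℚ (scaledLog p) = rescale (-(p : ℚ)) (PowerSeries.mk 1) := by
    ext n
    rw [coeff_derivative, scaledLog, coeff_mk, coeff_rescale, coeff_mk, Pi.one_apply, mul_one,
      Nat.add_sub_cancel, neg_pow, pow_succ (-1 : ℚ) (n + 1)]
    have : (n : ℚ) + 1 ≠ 0 := by positivity
    push_cast
    field_simp
    ring
  have := congrArg (rescale (-(p : ℚ))) (mk_one_mul_one_sub_eq_one ℚ)
  rwa [map_mul, map_sub, map_one, rescale_X, map_neg, neg_mul, sub_neg_eq_add, ← hD] at this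

lemma theta_subst_scaledLog_mul (p : ℕ) {k : ℚ⟦X⟧} (hk : constantCoeff k = 0) :
    theta ((scaledLog p).subst k) * (1 + C (p : ℚ) * k) = theta k := by
  have hk' := HasSubst.of_constantCoeff_zero' hk
  have := congrArg (substAlgHom hk') (derivative_scaledLog_mul p)
  rw [map_natCast C p] at this ⊢
  simp only [map_mul, map_add, map_one, map_natCast, substAlgHom_X, coe_substAlgHom] at this
  rw [theta_eq_X_mul_derivative, theta_eq_X_mul_derivative, derivative_subst hk']
  linear_combination (X * d⁄dX ℚ k) * this

end Logarithm

section LogarithmicPart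

variable {p : ℕ} [hp : Fact p.Prime]

lemma exists_pow_eq_expand_mul_one_add {v : ℚ⟦X⟧} (hv : v ∈ pIntegralSeries p)
    (hv1 : constantCoeff v = 1) : ∃ k ∈ pIntegralSeries p, constantCoeff k = 0 ∧
      v ^ p = expand p hp.out.ne_zero v * (1 + C (p : ℚ) * k) := by
  set h := C (p : ℚ)⁻¹ * (v ^ p - expand p hp.out.ne_zero v)
  have hexp1 : constantCoeff (expand p hp.out.ne_zero v) = 1 := by rw [constantCoeff_expand, hv1]
  obtain ⟨g, hg, hgv⟩ := exists_mul_eq_one_of_constantCoeff_eq_one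
    (expand_mem_pIntegralSeries hp.out.ne_zero hv) hexp1
  refine ⟨h * g, mul_mem (inv_mul_pow_sub_expand_mem hv) hg, ?_, ?_⟩
  · simp [h, hv1, hexp1]
  · have hpC : C (p : ℚ) * C (p : ℚ)⁻¹ = 1 := by
      rw [← map_mul, mul_inv_cancel₀ (by exact_mod_cast hp.out.ne_zero), map_one]
    linear_combination (-(C (p : ℚ)) * h) * hgv - (v ^ p - expand p hp.out.ne_zero v) * hpC

lemma exists_pow_eq_C_mul_expand_mul_one_add {t : ℚ⟦X⟧} (ht : t ∈ pIntegralSeries p)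
    (ht0 : constantCoeff t = 0) {y : ℚ} (hy : y ∈ pIntegral p) (hty : coeff 1 t * y = 1) :
    ∃ c : ℚ, c ≠ 0 ∧ ∃ k ∈ pIntegralSeries p, constantCoeff k = 0 ∧
      t ^ p = C c * expand p hp.out.ne_zero t * (1 + C (p : ℚ) * k) := by
  obtain ⟨v, rfl⟩ := X_dvd_iff.mpr ht0
  set a := coeff 1 (X * v)
  have hv : C y * v ∈ pIntegralSeries p :=
    mul_mem (C_mem_pIntegralSeries hy) fun n => by simpa using ht (n + 1)
  have hv1 : constantCoeff (C y * v) = 1 := by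
    simpa [a, mul_comm] using hty
  obtain ⟨k, hk, hk0, hvk⟩ := exists_pow_eq_expand_mul_one_add hv hv1
  have ha : a ≠ 0 := left_ne_zero_of_mul_eq_one hty
  have hXv : X * v = C a * X * (C y * v) := by
    rw [mul_comm (C a), mul_assoc, ← mul_assoc (C a), ← map_mul, hty, map_one, one_mul]
  refine ⟨a ^ (p - 1), pow_ne_zero _ ha, k, hk, hk0, ?_⟩
  have hCa : C a ^ p = C (a ^ (p - 1)) * C a := by
    rw [← map_pow, ← map_mul, ← pow_succ, Nat.sub_add_cancel hp.out.one_lt.le]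
  rw [hXv, mul_pow, mul_pow, hvk, hCa]
  simp only [map_mul, expand_C, expand_X]
  ring

lemma theta_mul_mul_expand_eq {q : ℕ} (hq : q ≠ 0) {t k Ψ : ℚ⟦X⟧} {c : ℚ} (hc : c ≠ 0)
    (hk0 : constantCoeff k = 0) (htk : t ^ q = C c * expand q hq t * (1 + C (q : ℚ) * k))
    (hΨ : theta Ψ * (1 + C (q : ℚ) * k) = theta k) :
    theta Ψ * t * expand q hq t = theta t * expand q hq t - expand q hq (theta t) * t := by
  obtain ⟨n, rfl⟩ := Nat.exists_eq_add_one_of_ne_zero hq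
  set T := expand (n + 1) hq t
  have hD := congrArg (d⁄dX ℚ) htk
  simp only [derivative_pow, Derivation.leibniz, derivative_C, derivative_one, smul_eq_mul,
    map_add, mul_zero, add_zero, Nat.add_sub_cancel] at hD
  have hE := theta_expand hq t
  rw [theta_eq_X_mul_derivative, theta_eq_X_mul_derivative] at hE
  rw [theta_eq_X_mul_derivative, theta_eq_X_mul_derivative] at hΨ ⊢
  simp only [map_natCast] at hD hE hΨ htk
  have hP : 1 + ((n + 1 : ℕ) : ℚ⟦X⟧) * k ≠ 0 := fun h => by
    simpa [hk0] using congrArg constantCoeff h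
  have hM : C c * (1 + ((n + 1 : ℕ) : ℚ⟦X⟧) * k) * ((n + 1 : ℕ) : ℚ⟦X⟧) ≠ 0 := by
    refine mul_ne_zero (mul_ne_zero (by simpa using hc) hP) ?_
    rw [← map_natCast C]
    exact (map_ne_zero_iff C C_injective).mpr (Nat.cast_ne_zero.mpr hq)
  refine mul_left_cancel₀ hM ?_
  -- `hD` is `θ` of `htk` divided by `X`; eliminate `t ^ (n + 1)`, `θ (E t)` and `θ Ψ` from it.
  linear_combination (C c * ((n + 1 : ℕ) : ℚ⟦X⟧) * t * T) * hΨ +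
    (((n + 1 : ℕ) : ℚ⟦X⟧) * X * d⁄dX ℚ t) * htk -
    (C c * (1 + ((n + 1 : ℕ) : ℚ⟦X⟧) * k) * t) * hE - (X * t) * hD

lemma exists_theta_mul_mul_expand_eq {t : ℚ⟦X⟧} (ht : t ∈ pIntegralSeries p)
    (ht0 : constantCoeff t = 0) {y : ℚ} (hy : y ∈ pIntegral p) (hty : coeff 1 t * y = 1) :
    ∃ Ψ ∈ pIntegralSeries p, theta Ψ * t * expand p hp.out.ne_zero t =
      theta t * expand p hp.out.ne_zero t - expand p hp.out.ne_zero (theta t) * t := by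
  obtain ⟨c, hc, k, hk, hk0, htk⟩ := exists_pow_eq_C_mul_expand_mul_one_add ht ht0 hy hty
  exact ⟨(scaledLog p).subst k, subst_mem_pIntegralSeries scaledLog_mem_pIntegralSeries hk hk0,
    theta_mul_mul_expand_eq _ hc hk0 htk (theta_subst_scaledLog_mul p hk0)⟩

end LogarithmicPart

section PowerPart

variable {p : ℕ} [hp : Fact p.Prime]

lemma subst_sub_inv_mul_expand_subst_mem {G t : ℚ⟦X⟧}
    (hG : G - C (p : ℚ)⁻¹ * expand p hp.out.ne_zero G ∈ pIntegralSeries p)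
    (hθG : theta G ∈ pIntegralSeries p) (ht : t ∈ pIntegralSeries p) (ht0 : constantCoeff t = 0) :
    G.subst t - C (p : ℚ)⁻¹ * expand p hp.out.ne_zero (G.subst t) ∈ pIntegralSeries p := by
  have ht0' : constantCoeff (t ^ p) = 0 := by simp [ht0, hp.out.ne_zero]
  have hEt0 : constantCoeff (expand p hp.out.ne_zero t) = 0 := by rw [constantCoeff_expand, ht0]
  have hsplit : G.subst t - C (p : ℚ)⁻¹ * expand p hp.out.ne_zero (G.subst t) =
      (G - C (p : ℚ)⁻¹ * expand p hp.out.ne_zero G).subst t +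
        C (p : ℚ)⁻¹ * (G.subst (t ^ p) - G.subst (expand p hp.out.ne_zero t)) := by
    have ht' := HasSubst.of_constantCoeff_zero' ht0
    rw [subst_sub ht', subst_C_mul ht', subst_expand ht0, expand_subst_eq_subst_expand ht0]
    ring
  rw [hsplit]
  exact add_mem (subst_mem_pIntegralSeries hG ht ht0)
    (inv_mul_subst_sub_subst_mem hθG (pow_mem ht p) (expand_mem_pIntegralSeries _ ht) ht0' hEt0
      (inv_mul_pow_sub_expand_mem ht))

lemma theta_subst_sub_inv_mul_expand_subst_mul {G t : ℚ⟦X⟧} (ht0 : constantCoeff t = 0) :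
    theta (G.subst t - C (p : ℚ)⁻¹ * expand p hp.out.ne_zero (G.subst t)) * t *
        expand p hp.out.ne_zero t =
      (theta G).subst t * theta t * expand p hp.out.ne_zero t -
        expand p hp.out.ne_zero ((theta G).subst t * theta t) * t := by
  have hp0 : (p : ℚ) ≠ 0 := by exact_mod_cast hp.out.ne_zero
  rw [← theta_subst_mul ht0, theta_sub, theta_C_mul, theta_expand, ← mul_assoc, ← map_mul,
    inv_mul_cancel₀ hp0, map_one, one_mul, map_mul]
  ring

end PowerPart

section Primitive

variable {p : ℕ} [hp : Fact p.Prime] (b : ℕ → ℚ)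

lemma theta_mk_div_natCast :
    theta (PowerSeries.mk fun n => b n / n) = PowerSeries.mk b - C (b 0) := by
  ext (_ | n)
  · simp [theta]
  · have : (n : ℚ) + 1 ≠ 0 := by positivity
    simp only [theta, coeff_mk, Nat.cast_add, Nat.cast_one, map_sub, coeff_succ_C, sub_zero]
    field_simp

lemma sub_div_natCast_mem_pIntegral
    (hcong : ∀ ℓ r : ℕ, 1 ≤ ℓ → 1 ≤ r → PMem p r (b (ℓ * p ^ r) - b (ℓ * p ^ (r - 1))))
    {n : ℕ} (hn : n ≠ 0) (hpn : p ∣ n) : (b n - b (n / p)) / n ∈ pIntegral p := by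
  set r := n.factorization p
  set ℓ := n / p ^ r
  have hr : 1 ≤ r := hp.out.factorization_pos_of_dvd hn hpn
  have hn_eq : ℓ * p ^ r = n := by rw [mul_comm]; exact Nat.ordProj_mul_ordCompl_eq_self n p
  have hℓ : 1 ≤ ℓ := Nat.pos_of_ne_zero fun h => hn (by rw [← hn_eq, h, zero_mul])
  have hnp : ℓ * p ^ (r - 1) = n / p := by
    rw [← hn_eq, ← Nat.sub_add_cancel hr, pow_succ, ← mul_assoc, Nat.mul_div_cancel _ hp.out.pos,
      Nat.add_sub_cancel]
  have := hcong ℓ r hℓ hr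
  rw [hn_eq, hnp] at this
  exact pMem_div_natCast_mem_pIntegral this le_rfl

lemma mk_div_natCast_sub_inv_mul_expand_mem (hb : ∀ n : ℕ, PInt p (b n))
    (hcong : ∀ ℓ r : ℕ, 1 ≤ ℓ → 1 ≤ r → PMem p r (b (ℓ * p ^ r) - b (ℓ * p ^ (r - 1)))) :
    (PowerSeries.mk fun n => b n / n) -
      C (p : ℚ)⁻¹ * expand p hp.out.ne_zero (PowerSeries.mk fun n => b n / n) ∈
      pIntegralSeries p := by
  intro n
  rw [map_sub, coeff_C_mul, coeff_expand, coeff_mk]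
  split_ifs with hpn
  · rcases eq_or_ne n 0 with rfl | hn
    · simp
    have hcast : (p : ℚ)⁻¹ * (b (n / p) / ((n / p : ℕ) : ℚ)) = b (n / p) / n := by
      have hp0 : (p : ℚ) ≠ 0 := by exact_mod_cast hp.out.ne_zero
      rw [Nat.cast_div hpn hp0]
      field_simp
    simp only [coeff_mk, hcast, ← sub_div]
    exact sub_div_natCast_mem_pIntegral b hcong hn hpn
  · simpa using div_natCast_mem_pIntegral (hb n) hpn

end Primitive

/-- The identity `S₁·θt/t − (1/p)·S₂·θT/T = θΨ` (with `T = t(u^p)`, `S₁ = Σ b_n tⁿ`,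
`S₂ = Σ b_n Tⁿ`) is stated multiplied through by `p·t·T`. -/
theorem omega_exactness (p : ℕ) (hp : p.Prime) (b : ℕ → ℚ)
    (hb : ∀ n : ℕ, PInt p (b n))
    (hcong : ∀ ℓ r : ℕ, 1 ≤ ℓ → 1 ≤ r → PMem p r (b (ℓ * p ^ r) - b (ℓ * p ^ (r - 1))))
    (t : PowerSeries ℚ) (ht : ∀ n : ℕ, PInt p (coeff (R := ℚ) n t))
    (ht0 : constantCoeff (R := ℚ) t = 0)
    (ha1 : PInt p (coeff (R := ℚ) 1 t) ∧ ∃ y : ℚ, PInt p y ∧ coeff (R := ℚ) 1 t * y = 1) :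
    ∃ Ψ : PowerSeries ℚ, (∀ n : ℕ, PInt p (coeff (R := ℚ) n Ψ)) ∧
      (C (R := ℚ) p) * (PowerSeries.mk fun m => ∑ n ∈ range (m + 1), b n * coeff (R := ℚ) m (t ^ n)) *
          theta t * substPow p t -
        (PowerSeries.mk fun m => ∑ n ∈ range (m + 1), b n * coeff (R := ℚ) m ((substPow p t) ^ n)) *
          theta (substPow p t) * t =
      (C (R := ℚ) p) * theta Ψ * t * substPow p t := by
  have : Fact p.Prime := ⟨hp⟩
  obtain ⟨-, y, hy, hty⟩ := ha1
  have hEt0 : constantCoeff (expand p hp.ne_zero t) = 0 := by rw [constantCoeff_expand, ht0]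
  obtain ⟨Ψ₀, hΨ₀, hθΨ₀⟩ := exists_theta_mul_mul_expand_eq ht ht0 hy hty
  set G := PowerSeries.mk fun n => b n / n
  have hθG : theta G ∈ pIntegralSeries p := by
    rw [theta_mk_div_natCast]
    exact sub_mem (fun n => by rw [coeff_mk]; exact hb n) (C_mem_pIntegralSeries (hb 0))
  have hΨ₁ := subst_sub_inv_mul_expand_subst_mem
    (mk_div_natCast_sub_inv_mul_expand_mem b hb hcong) hθG ht ht0
  have hθΨ₁ := theta_subst_sub_inv_mul_expand_subst_mul (G := G) (p := p) ht0
  rw [theta_mk_div_natCast, subst_sub (HasSubst.of_constantCoeff_zero' ht0), subst_C', map_mul,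
    map_sub, expand_C] at hθΨ₁
  refine ⟨_, add_mem (mul_mem (C_mem_pIntegralSeries (hb 0)) hΨ₀) hΨ₁, ?_⟩
  rw [substPow_eq_expand hp.ne_zero, mk_sum_mul_coeff_pow_eq_subst ht0,
    mk_sum_mul_coeff_pow_eq_subst hEt0, ← expand_subst_eq_subst_expand ht0, theta_expand,
    theta_add, theta_C_mul]
  linear_combination -(C (p : ℚ) * C (b 0)) * hθΨ₀ - C (p : ℚ) * hθΨ₁
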